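/- arXiv:1606.09266 — 8 statements merged into one kernel-verified Lean document; each statement's English description precedes it below -/
import Mathlib

section
/- Let X and Y be complex Hilbert spaces, T : X → Y a bounded linear operator, and x† ∈ X with T*T x† = T*y for some y ∈ Y. For α > 0 let x_α be the unique solution of (T*T + αI)x_α = T*y. Suppose φ : [0,∞) → ℝ is continuous with φ(0) = 0 and φ(λ) > 0 for λ > 0, and there is a constant c₀ > 0 such that α·φ(λ)/(λ + α) ≤ c₀·φ(α) for all α > 0 and λ > 0. If x† = φ(T*T)u for some u ∈ X, where φ(T*T) is defined by the continuous functional calculus applied to the self-adjoint operator T*T, then ‖x† − x_α‖ ≤ c₀‖u‖φ(α) for every α > 0. -/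
/-!
With `A = T*T ≥ 0`, both `x† - x_α` and `cfc g A u` for `g λ = α φ(λ) / (λ + α)` solve
`(A + α) z = α x†`, and `A + α` is injective because `A` is positive; so `x† - x_α = g(A) u`.
The norm of `g(A)` is the supremum of `|g|` on the spectrum of `A` (contained in `[0, ∞)`),
which the source condition bounds by `c₀ φ(α)`.
-/

open ContinuousLinearMap

lemma ContinuousLinearMap.IsPositive.add_smul_injective {X : Type*} [NormedAddCommGroup X]
    [InnerProductSpace ℂ X] {a : X →L[ℂ] X} (ha : a.IsPositive) {α : ℝ} (hα : 0 < α) :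
    Function.Injective fun x ↦ a x + α • x := by
  intro x y hxy
  set z := x - y
  have hz : a z + α • z = 0 := by
    simp only [z, map_sub, smul_sub]
    rw [sub_add_sub_comm]
    exact sub_eq_zero.mpr hxy
  have hre : RCLike.re (inner ℂ (a z) z) + α * ‖z‖ ^ 2 = 0 := by
    simpa [inner_add_left, inner_smul_real_left, inner_self_eq_norm_sq_to_K,
      ← Complex.ofReal_pow] using congrArg (fun v ↦ RCLike.re (inner ℂ v z)) hz
  have : ‖z‖ ^ 2 = 0 := by nlinarith [ha.re_inner_nonneg_left z, sq_nonneg ‖z‖]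
  simpa [z, sub_eq_zero] using this

section Tikhonov

variable {A : Type*} [CStarAlgebra A] [PartialOrder A] [StarOrderedRing A] {a : A}
  {f : ℝ → ℝ} {α C : ℝ}

lemma mul_cfc_tikhonov_add_smul (ha : 0 ≤ a) (hf : ContinuousOn f (spectrum ℝ a)) (hα : 0 < α) :
    a * cfc (fun l ↦ α * f l / (l + α)) a + α • cfc (fun l ↦ α * f l / (l + α)) a =
      α • cfc f a := by
  set g : ℝ → ℝ := fun l ↦ α * f l / (l + α)
  have hden : ∀ l ∈ spectrum ℝ a, l + α ≠ 0 := fun l hl ↦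
    (add_pos_of_nonneg_of_pos (spectrum_nonneg_of_nonneg ha hl) hα).ne'
  have hg : ContinuousOn g (spectrum ℝ a) :=
    (continuousOn_const.mul hf).div (continuousOn_id.add continuousOn_const) hden
  nth_rw 1 [← cfc_id' ℝ a]
  rw [← cfc_mul (fun l ↦ l) g a continuousOn_id hg, ← cfc_const_mul α g a hg,
    ← cfc_add a (fun l ↦ l * g l) (fun l ↦ α * g l)
    (continuousOn_id.mul hg) (continuousOn_const.mul hg), ← cfc_const_mul α f a hf]
  refine cfc_congr fun l hl ↦ ?_
  simp only [g]
  field_simp [hden l hl]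

lemma abs_tikhonov_le (hα : 0 < α) (hf0 : f 0 = 0) (hf : ∀ l > 0, 0 ≤ f l)
    (hC : ∀ l > 0, α * f l / (l + α) ≤ C) {l : ℝ} (hl : 0 ≤ l) :
    |α * f l / (l + α)| ≤ C := by
  rcases hl.eq_or_lt with rfl | hl
  -- at `l = 0` the claim is `0 ≤ C`, which the bound at `l = α` provides
  · simpa [hf0] using (div_nonneg (mul_nonneg hα.le (hf α hα)) (by positivity)).trans (hC α hα)
  · rw [abs_of_nonneg (div_nonneg (mul_nonneg hα.le (hf l hl)) (by positivity))]
    exact hC l hl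

lemma norm_cfc_tikhonov_le (ha : 0 ≤ a) (hα : 0 < α) (hf0 : f 0 = 0) (hf : ∀ l > 0, 0 ≤ f l)
    (hC : ∀ l > 0, α * f l / (l + α) ≤ C) :
    ‖cfc (fun l ↦ α * f l / (l + α)) a‖ ≤ C :=
  norm_cfc_le ((abs_nonneg _).trans (abs_tikhonov_le hα hf0 hf hC le_rfl))
    fun _ hl ↦ abs_tikhonov_le hα hf0 hf hC (spectrum_nonneg_of_nonneg ha hl)

end Tikhonov

theorem tikhonov_source_condition_rate_general
    {X Y : Type*} [NormedAddCommGroup X] [InnerProductSpace ℂ X] [CompleteSpace X]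
    [NormedAddCommGroup Y] [InnerProductSpace ℂ Y] [CompleteSpace Y]
    (T : X →L[ℂ] Y) (y : Y) (xdag : X)
    (hxdag : (adjoint T ∘L T) xdag = adjoint T y)
    (xa : ℝ → X)
    (hxa : ∀ α > (0 : ℝ), (adjoint T ∘L T) (xa α) + α • xa α = adjoint T y)
    (φ : ℝ → ℝ) (hφcont : ContinuousOn φ (Set.Ici 0)) (hφ0 : φ 0 = 0)
    (hφpos : ∀ l > (0 : ℝ), 0 < φ l)
    (c₀ : ℝ)
    (hsrc : ∀ α > (0 : ℝ), ∀ l > (0 : ℝ), α * φ l / (l + α) ≤ c₀ * φ α)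
    (u : X) (hu : xdag = cfc φ (adjoint T ∘L T) u) :
    ∀ α > (0 : ℝ), ‖xdag - xa α‖ ≤ c₀ * ‖u‖ * φ α := by
  intro α hα
  set a := adjoint T ∘L T
  have hpos : a.IsPositive := isPositive_adjoint_comp_self T
  have ha : 0 ≤ a := (nonneg_iff_isPositive a).mpr hpos
  set G := cfc (fun l ↦ α * φ l / (l + α)) a
  have hG : a (G u) + α • G u = α • xdag := by
    have hφspec : ContinuousOn φ (spectrum ℝ a) :=
      hφcont.mono fun _ hl ↦ spectrum_nonneg_of_nonneg ha hl
    simpa [hu, mul_apply] using congrArg (· u) (mul_cfc_tikhonov_add_smul ha hφspec hα)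
  have herr : a (xdag - xa α) + α • (xdag - xa α) = α • xdag := by
    rw [map_sub, smul_sub, hxdag, ← hxa α hα]
    abel
  have hGnorm : ‖G‖ ≤ c₀ * φ α :=
    norm_cfc_tikhonov_le ha hα hφ0 (fun l hl ↦ (hφpos l hl).le) (hsrc α hα)
  calc ‖xdag - xa α‖ = ‖G u‖ := by rw [hpos.add_smul_injective hα (herr.trans hG.symm)]
    _ ≤ ‖G‖ * ‖u‖ := G.le_opNorm u
    _ ≤ c₀ * φ α * ‖u‖ := by gcongr
    _ = c₀ * ‖u‖ * φ α := by ring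

theorem tikhonov_source_condition_rate
    {X Y : Type*} [NormedAddCommGroup X] [InnerProductSpace ℂ X] [CompleteSpace X]
    [NormedAddCommGroup Y] [InnerProductSpace ℂ Y] [CompleteSpace Y]
    (T : X →L[ℂ] Y) (y : Y) (xdag : X)
    (hxdag : (adjoint T ∘L T) xdag = adjoint T y)
    (xa : ℝ → X)
    (hxa : ∀ α > (0 : ℝ), (adjoint T ∘L T) (xa α) + α • xa α = adjoint T y)
    (φ : ℝ → ℝ) (hφcont : ContinuousOn φ (Set.Ici 0)) (hφ0 : φ 0 = 0)
    (hφpos : ∀ l > (0 : ℝ), 0 < φ l)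
    (c₀ : ℝ) (hc₀ : 0 < c₀)
    (hsrc : ∀ α > (0 : ℝ), ∀ l > (0 : ℝ), α * φ l / (l + α) ≤ c₀ * φ α)
    (u : X) (hu : xdag = cfc φ (adjoint T ∘L T) u) :
    ∀ α > (0 : ℝ), ‖xdag - xa α‖ ≤ c₀ * ‖u‖ * φ α :=
  tikhonov_source_condition_rate_general T y xdag hxdag xa hxa φ hφcont hφ0 hφpos c₀ hsrc u hu
end

section
/- Let X and Y be complex Hilbert spaces, T : X → Y a bounded linear operator, y ∈ Y, and x† ∈ X an element of the orthogonal complement of the kernel of T satisfying T*T x† = T*y. For each α > 0 let x_α be the unique solution of (T*T + αI)x_α = T*y. Then ‖x† − x_α‖ → 0 as α → 0⁺. -/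
/-!
The error `e = x† - x_α` solves `(T*T + α) e = α x†`; pairing with `e` gives
`‖T e‖² + α ‖e‖² = α Re⟪x†, e⟫`. Splitting `x† = (x† - T* w) + T* w` and absorbing `‖T e‖`
yields `‖e‖² ≤ α ‖w‖² + ‖x† - T* w‖²` for every `w`. Since `(ker T)ᗮ` is the closure of the
range of `T*`, the second term can be made arbitrarily small, and then `α → 0` kills the first.
-/

open ContinuousLinearMap Filter Topology

section

variable {𝕜 X Y : Type*} [RCLike 𝕜] [NormedAddCommGroup X] [InnerProductSpace 𝕜 X] [CompleteSpace X]
  [NormedAddCommGroup Y] [InnerProductSpace 𝕜 Y] [CompleteSpace Y]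

local notation "⟪" x ", " y "⟫" => inner 𝕜 x y

theorem mem_closure_range_adjoint_of_mem_orthogonal_ker {T : X →L[𝕜] Y} {x : X}
    (hx : x ∈ (LinearMap.ker (T : X →ₗ[𝕜] Y))ᗮ) : x ∈ closure (Set.range (adjoint T)) := by
  rwa [orthogonal_ker, ← SetLike.mem_coe, Submodule.topologicalClosure_coe,
    LinearMap.coe_range] at hx

theorem norm_apply_sq_add_mul_norm_sq_eq_re_inner {T : X →L[𝕜] Y} {α : ℝ} {x e : X}
    (he : (adjoint T ∘L T) e + (α : 𝕜) • e = (α : 𝕜) • x) :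
    ‖T e‖ ^ 2 + α * ‖e‖ ^ 2 = α * RCLike.re ⟪x, e⟫ := by
  have h := congrArg (fun v => RCLike.re ⟪v, e⟫) he
  simpa [inner_add_left, inner_smul_left, adjoint_inner_left, inner_self_eq_norm_sq] using h

theorem norm_sq_le_of_adjoint_comp_self_add_smul_eq {T : X →L[𝕜] Y} {α : ℝ} (hα : 0 < α)
    {x e : X} (he : (adjoint T ∘L T) e + (α : 𝕜) • e = (α : 𝕜) • x) (w : Y) :
    ‖e‖ ^ 2 ≤ α * ‖w‖ ^ 2 + ‖x - adjoint T w‖ ^ 2 := by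
  have hsplit : RCLike.re ⟪x, e⟫ = RCLike.re ⟪x - adjoint T w, e⟫ + RCLike.re ⟪w, T e⟫ := by
    rw [← adjoint_inner_left, ← map_add, ← inner_add_left, sub_add_cancel]
  have hre : RCLike.re ⟪x, e⟫ ≤ ‖x - adjoint T w‖ * ‖e‖ + ‖w‖ * ‖T e‖ :=
    hsplit ▸ add_le_add (re_inner_le_norm _ _) (re_inner_le_norm _ _)
  have henergy := norm_apply_sq_add_mul_norm_sq_eq_re_inner he
  nlinarith [sq_nonneg (‖T e‖ - α * ‖w‖), sq_nonneg (‖e‖ - ‖x - adjoint T w‖)]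

end

theorem tendsto_nhdsWithin_Ioi_zero_of_forall_le_mul_add {f : ℝ → ℝ}
    (hf_nonneg : ∀ α > 0, 0 ≤ f α) (hf : ∀ ε > 0, ∃ C, ∀ α > 0, f α ≤ C * α + ε) :
    Tendsto f (𝓝[>] 0) (𝓝 0) := by
  refine tendsto_order.2 ⟨fun a ha => ?_, fun a ha => ?_⟩
  · filter_upwards [self_mem_nhdsWithin] with α hα using ha.trans_le (hf_nonneg α hα)
  · obtain ⟨C, hC⟩ := hf (a / 2) (half_pos ha)
    have hlim : Tendsto (fun α => C * α + a / 2) (𝓝 0) (𝓝 (a / 2)) := by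
      simpa using ((tendsto_id (x := 𝓝 (0 : ℝ))).const_mul C).add_const (a / 2)
    filter_upwards [self_mem_nhdsWithin,
      nhdsWithin_le_nhds (hlim.eventually (gt_mem_nhds (half_lt_self ha)))]
      with α hα hlt using (hC α hα).trans_lt hlt

theorem tikhonov_convergence
    {X Y : Type*} [NormedAddCommGroup X] [InnerProductSpace ℂ X] [CompleteSpace X]
    [NormedAddCommGroup Y] [InnerProductSpace ℂ Y] [CompleteSpace Y]
    (T : X →L[ℂ] Y) (y : Y) (xdag : X)
    (hxdag_mem : xdag ∈ (LinearMap.ker (T : X →ₗ[ℂ] Y))ᗮ)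
    (hxdag : (adjoint T ∘L T) xdag = adjoint T y)
    (xa : ℝ → X)
    (hxa : ∀ α > (0 : ℝ), (adjoint T ∘L T) (xa α) + α • xa α = adjoint T y) :
    Tendsto (fun α => ‖xdag - xa α‖) (𝓝[>] (0 : ℝ)) (𝓝 0) := by
  have herror : ∀ α > (0 : ℝ),
      (adjoint T ∘L T) (xdag - xa α) + (α : ℂ) • (xdag - xa α) = (α : ℂ) • xdag := by
    intro α hα
    rw [map_sub, hxdag, Complex.coe_smul, Complex.coe_smul]
    linear_combination (norm := module) - hxa α hα
  have hsq : Tendsto (fun α => ‖xdag - xa α‖ ^ 2) (𝓝[>] 0) (𝓝 0) := by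
    refine tendsto_nhdsWithin_Ioi_zero_of_forall_le_mul_add (fun _ _ => by positivity) ?_
    intro ε hε
    obtain ⟨_, ⟨w, rfl⟩, hw⟩ := Metric.mem_closure_iff.1
      (mem_closure_range_adjoint_of_mem_orthogonal_ker hxdag_mem) _ (Real.sqrt_pos.2 hε)
    refine ⟨‖w‖ ^ 2, fun α hα => ?_⟩
    have hwε : ‖xdag - adjoint T w‖ ^ 2 ≤ ε := by
      rw [← dist_eq_norm]
      nlinarith [Real.sq_sqrt hε.le, dist_nonneg (x := xdag) (y := adjoint T w)]
    linarith [norm_sq_le_of_adjoint_comp_self_add_smul_eq hα (herror α hα) w]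
  simpa [Real.sqrt_sq (norm_nonneg _)] using hsq.sqrt
end

section
/- Let X, Y be complex Hilbert spaces and Yₙ a finite-dimensional complex inner product space. Let T : X → Y and Tₙ : X → Yₙ be bounded linear operators. Let x† ∈ X, let x_n† ∈ X belong to the orthogonal complement of ker Tₙ with Tₙ x_n† = Tₙ x†, and for α > 0 let x_α be the unique solution of (T*T + αI)x_α = T*T x†. If εₙ > 0 satisfies ‖T*T − Tₙ*Tₙ‖ ≤ εₙ, then ‖x† − x_n†‖ ≤ (1 + εₙ/α)·‖x† − x_α‖ for every α > 0. -/
/-! Put `v = x† - xₙ†` and `w = x† - x_α`. Since `v ∈ ker Tₙ` and `xₙ† ⊥ ker Tₙ`, we have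
`‖v‖² = ⟪v, x†⟫ = ⟪v, w⟫ + ⟪v, x_α⟫`. The normal equation gives `α x_α = T*T w`, and pairing with
`v ∈ ker Tₙ` only sees `(T*T - Tₙ*Tₙ) w`, so `|⟪v, x_α⟫| ≤ (ε / α) ‖v‖ ‖w‖`. -/

open ContinuousLinearMap

theorem norm_inner_le_of_apply_eq_zero {𝕜 E F : Type*} [RCLike 𝕜]
    [NormedAddCommGroup E] [InnerProductSpace 𝕜 E] [CompleteSpace E]
    [NormedAddCommGroup F] [InnerProductSpace 𝕜 F] [CompleteSpace F] {A : E →L[𝕜] F} {S : E →L[𝕜] E} {ε : ℝ}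
    (hS : ‖S - adjoint A ∘L A‖ ≤ ε) {v : E} (hv : A v = 0) (u : E) :
    ‖inner 𝕜 v (S u)‖ ≤ ‖v‖ * (ε * ‖u‖) := by
  have hAA : inner 𝕜 v ((adjoint A ∘L A) u) = 0 := by
    rw [comp_apply, adjoint_inner_right, hv, inner_zero_left]
  have hSu : inner 𝕜 v (S u) = inner 𝕜 v ((S - adjoint A ∘L A) u) := by
    rw [sub_apply, inner_sub_right, hAA, sub_zero]
  rw [hSu]
  exact (norm_inner_le_norm _ _).trans <| mul_le_mul_of_nonneg_left
    ((le_opNorm _ _).trans (mul_le_mul_of_nonneg_right hS (norm_nonneg u))) (norm_nonneg v)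

theorem norm_le_add_of_inner_self_eq_add {𝕜 E : Type*} [RCLike 𝕜] [NormedAddCommGroup E]
    [InnerProductSpace 𝕜 E] {v w z : E} {c : ℝ} (hc : 0 ≤ c)
    (hv : inner 𝕜 v v = inner 𝕜 v w + inner 𝕜 v z) (hz : ‖inner 𝕜 v z‖ ≤ ‖v‖ * c) :
    ‖v‖ ≤ ‖w‖ + c := by
  have hsq : ‖v‖ * ‖v‖ ≤ ‖v‖ * (‖w‖ + c) :=
    calc ‖v‖ * ‖v‖ = ‖inner 𝕜 v v‖ := by
          rw [← inner_self_eq_norm_mul_norm (𝕜 := 𝕜), inner_self_re_eq_norm]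
      _ ≤ ‖inner 𝕜 v w‖ + ‖inner 𝕜 v z‖ := hv ▸ norm_add_le _ _
      _ ≤ ‖v‖ * ‖w‖ + ‖v‖ * c := add_le_add (norm_inner_le_norm v w) hz
      _ = ‖v‖ * (‖w‖ + c) := by ring
  rcases (norm_nonneg v).eq_or_lt with hv0 | hvpos
  · rw [← hv0]; positivity
  · exact le_of_mul_le_mul_left hsq hvpos

theorem discrete_regularization_error_estimate_general
    {X Y Yn : Type*} [NormedAddCommGroup X] [InnerProductSpace ℂ X] [CompleteSpace X]
    [NormedAddCommGroup Y] [InnerProductSpace ℂ Y] [CompleteSpace Y]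
    [NormedAddCommGroup Yn] [InnerProductSpace ℂ Yn] [FiniteDimensional ℂ Yn]
    (T : X →L[ℂ] Y) (Tn : X →L[ℂ] Yn) (xdag xndag : X)
    (hmem : xndag ∈ (LinearMap.ker (Tn : X →ₗ[ℂ] Yn))ᗮ)
    (heq : Tn xndag = Tn xdag)
    (xa : ℝ → X)
    (hxa : ∀ α > (0 : ℝ),
      (adjoint T ∘L T) (xa α) + α • xa α = (adjoint T ∘L T) xdag)
    (ε : ℝ)
    (hnorm : ‖(adjoint T ∘L T) - (adjoint Tn ∘L Tn)‖ ≤ ε) :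
    ∀ α > (0 : ℝ), ‖xdag - xndag‖ ≤ (1 + ε / α) * ‖xdag - xa α‖ := by
  intro α hα
  set v := xdag - xndag
  set w := xdag - xa α
  have hTnv : Tn v = 0 := by simp [v, heq]
  have hv_orth : inner ℂ v xndag = 0 :=
    Submodule.inner_right_of_mem_orthogonal (LinearMap.mem_ker.mpr hTnv) hmem
  have hTTw : (adjoint T ∘L T) w = α • xa α := by
    rw [map_sub, ← hxa α hα, add_sub_cancel_left]
  have hsplit : inner ℂ v v = inner ℂ v w + inner ℂ v (xa α) :=
    calc inner ℂ v v = inner ℂ v (w + xa α - xndag) := by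
          congr 1
          simp only [v, w]
          abel
      _ = inner ℂ v w + inner ℂ v (xa α) := by
          rw [inner_sub_right, hv_orth, sub_zero, inner_add_right]
  have hbound : ‖inner ℂ v (xa α)‖ ≤ ‖v‖ * (ε / α * ‖w‖) := by
    have h := norm_inner_le_of_apply_eq_zero hnorm hTnv w
    rw [hTTw, RCLike.real_smul_eq_coe_smul (K := ℂ), inner_smul_right, norm_mul,
      RCLike.norm_ofReal, abs_of_pos hα] at h
    rw [div_mul_eq_mul_div, mul_div_assoc', le_div_iff₀ hα]
    linarith
  have hε : 0 ≤ ε := (norm_nonneg _).trans hnorm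
  calc ‖v‖ ≤ ‖w‖ + ε / α * ‖w‖ := norm_le_add_of_inner_self_eq_add (by positivity) hsplit hbound
    _ = (1 + ε / α) * ‖w‖ := by ring

theorem discrete_regularization_error_estimate
    {X Y Yn : Type*} [NormedAddCommGroup X] [InnerProductSpace ℂ X] [CompleteSpace X]
    [NormedAddCommGroup Y] [InnerProductSpace ℂ Y] [CompleteSpace Y]
    [NormedAddCommGroup Yn] [InnerProductSpace ℂ Yn] [FiniteDimensional ℂ Yn]
    (T : X →L[ℂ] Y) (Tn : X →L[ℂ] Yn) (xdag xndag : X)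
    (hmem : xndag ∈ (LinearMap.ker (Tn : X →ₗ[ℂ] Yn))ᗮ)
    (heq : Tn xndag = Tn xdag)
    (xa : ℝ → X)
    (hxa : ∀ α > (0 : ℝ),
      (adjoint T ∘L T) (xa α) + α • xa α = (adjoint T ∘L T) xdag)
    (ε : ℝ) (hε : 0 < ε)
    (hnorm : ‖(adjoint T ∘L T) - (adjoint Tn ∘L Tn)‖ ≤ ε) :
    ∀ α > (0 : ℝ), ‖xdag - xndag‖ ≤ (1 + ε / α) * ‖xdag - xa α‖ :=
  discrete_regularization_error_estimate_general T Tn xdag xndag hmem heq xa hxa ε hnorm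
end

section
/- Let X, Y be complex Hilbert spaces and for each n let Yₙ be a finite-dimensional complex inner product space. Let T : X → Y and Tₙ : X → Yₙ be bounded linear operators. Let y ∈ Y and let x† be an element of the orthogonal complement of ker T with T*T x† = T*y, and for each n let x_n† belong to the orthogonal complement of ker Tₙ with Tₙ x_n† = Tₙ x†. If ‖T*T − Tₙ*Tₙ‖ → 0 as n → ∞, then ‖x† − x_n†‖ → 0 as n → ∞. -/
/-!
Put `dₙ = x† - xₙ†`. Since `dₙ ∈ ker Tₙ` and `xₙ† ⊥ ker Tₙ`, `dₙ` is the orthogonal projection of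
`x†` onto `ker Tₙ`, so `‖dₙ‖ ≤ ‖x†‖` and `‖dₙ‖² = re ⟪dₙ, x†⟫`. On `ker Tₙ` the quadratic forms of
`T*T` and `T*T - Tₙ*Tₙ` agree, whence `‖T dₙ‖² ≤ ‖T*T - Tₙ*Tₙ‖ ‖x†‖² → 0`. Then
`⟪dₙ, T* z⟫ = ⟪T dₙ, z⟫ → 0`, and as the `dₙ` are bounded this extends to the closure of `range T*`,
which is `(ker T)ᗮ ∋ x†`.
-/

open ContinuousLinearMap Filter Topology
open scoped InnerProductSpace InnerProduct

section

variable {𝕜 E : Type*} [RCLike 𝕜] [NormedAddCommGroup E] [InnerProductSpace 𝕜 E]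

theorem norm_sub_le_of_inner_sub_eq_zero {x x' : E} (h : ⟪x - x', x'⟫_𝕜 = 0) :
    ‖x - x'‖ ≤ ‖x‖ := by
  have hpyth := norm_add_sq_eq_norm_sq_add_norm_sq_of_inner_eq_zero _ _ h
  rw [sub_add_cancel] at hpyth
  exact (pow_le_pow_iff_left₀ (norm_nonneg _) (norm_nonneg _) two_ne_zero).1
    (by nlinarith [sq_nonneg ‖x'‖])

theorem norm_sub_sq_eq_re_inner_of_inner_sub_eq_zero {x x' : E} (h : ⟪x - x', x'⟫_𝕜 = 0) :
    ‖x - x'‖ ^ 2 = RCLike.re ⟪x - x', x⟫_𝕜 := by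
  rw [← inner_self_eq_norm_sq (𝕜 := 𝕜), inner_sub_right, h, sub_zero]

end

section

variable {𝕜 E F : Type*} [RCLike 𝕜]
  [NormedAddCommGroup E] [InnerProductSpace 𝕜 E] [CompleteSpace E]
  [NormedAddCommGroup F] [InnerProductSpace 𝕜 F] [CompleteSpace F]

theorem norm_apply_sq_le_of_apply_eq_zero {G : Type*} [NormedAddCommGroup G]
    [InnerProductSpace 𝕜 G] [CompleteSpace G] (T : E →L[𝕜] F) (S : E →L[𝕜] G) {x : E}
    (hx : S x = 0) : ‖T x‖ ^ 2 ≤ ‖T† ∘L T - S† ∘L S‖ * ‖x‖ ^ 2 := by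
  have hform : (T† ∘L T) x = (T† ∘L T - S† ∘L S) x := by simp [hx]
  calc ‖T x‖ ^ 2 = RCLike.re ⟪(T† ∘L T - S† ∘L S) x, x⟫_𝕜 := by
        rw [apply_norm_sq_eq_inner_adjoint_left, hform]
    _ ≤ ‖(T† ∘L T - S† ∘L S) x‖ * ‖x‖ := re_inner_le_norm _ _
    _ ≤ ‖T† ∘L T - S† ∘L S‖ * ‖x‖ ^ 2 := by
        rw [sq, ← mul_assoc]; gcongr; exact le_opNorm _ _

theorem tendsto_apply_of_apply_eq_zero {ι : Type*} {l : Filter ι} {G : ι → Type*}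
    [∀ i, NormedAddCommGroup (G i)] [∀ i, InnerProductSpace 𝕜 (G i)] [∀ i, CompleteSpace (G i)]
    (T : E →L[𝕜] F) (S : ∀ i, E →L[𝕜] G i)
    (hS : Tendsto (fun i => ‖T† ∘L T - (S i)† ∘L S i‖) l (𝓝 0))
    {d : ι → E} {C : ℝ} (hd : ∀ i, ‖d i‖ ≤ C) (hker : ∀ i, S i (d i) = 0) :
    Tendsto (fun i => T (d i)) l (𝓝 0) := by
  have hsq : Tendsto (fun i => ‖T (d i)‖ ^ 2) l (𝓝 0) := by
    refine squeeze_zero (fun _ => sq_nonneg _) (fun i => ?_) (by simpa using hS.mul_const (C ^ 2))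
    refine (norm_apply_sq_le_of_apply_eq_zero T (S i) (hker i)).trans ?_
    gcongr
    exact hd i
  rw [tendsto_zero_iff_norm_tendsto_zero]
  simpa using hsq.sqrt

theorem tendsto_inner_of_mem_orthogonal_ker {ι : Type*} {l : Filter ι} (T : E →L[𝕜] F)
    {d : ι → E} {C : ℝ} (hd : ∀ i, ‖d i‖ ≤ C) (hTd : Tendsto (fun i => T (d i)) l (𝓝 0))
    {x : E} (hx : x ∈ (LinearMap.ker (T : E →ₗ[𝕜] F))ᗮ) :
    Tendsto (fun i => ⟪d i, x⟫_𝕜) l (𝓝 0) := by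
  have hbdd : ∃ C, ∀ i, ‖innerSL 𝕜 (d i)‖ ≤ C :=
    ⟨C, fun i => (innerSL_apply_norm 𝕜 (d i)).trans_le (hd i)⟩
  have hequi := ((NormedSpace.equicontinuous_TFAE fun i => innerSL 𝕜 (d i)).out 5 1).mp hbdd
  have hclosed := hequi.isClosed_setOfPred_tendsto (l := l) (f := fun _ => 0) continuous_const
  have hrange : ∀ z, Tendsto (fun i => ⟪d i, adjoint T z⟫_𝕜) l (𝓝 0) := fun z => by
    simpa [adjoint_inner_right] using hTd.inner (tendsto_const_nhds (x := z))
  rw [orthogonal_ker] at hx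
  exact closure_minimal (by rintro _ ⟨z, rfl⟩; exact hrange z) hclosed hx

end

theorem discrete_regularization_convergence_general
    {X Y : Type*} [NormedAddCommGroup X] [InnerProductSpace ℂ X] [CompleteSpace X]
    [NormedAddCommGroup Y] [InnerProductSpace ℂ Y] [CompleteSpace Y]
    {Yn : ℕ → Type*} [∀ n, NormedAddCommGroup (Yn n)]
    [∀ n, InnerProductSpace ℂ (Yn n)] [∀ n, FiniteDimensional ℂ (Yn n)]
    (T : X →L[ℂ] Y) (Tn : ∀ n, X →L[ℂ] Yn n)
    (xdag : X)
    (hxdag_mem : xdag ∈ (LinearMap.ker (T : X →ₗ[ℂ] Y))ᗮ)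
    (xndag : ℕ → X)
    (hmem : ∀ n, xndag n ∈ (LinearMap.ker (Tn n : X →ₗ[ℂ] Yn n))ᗮ)
    (heq : ∀ n, Tn n (xndag n) = Tn n xdag)
    (hconv : Tendsto (fun n => ‖(adjoint T ∘L T) - (adjoint (Tn n) ∘L Tn n)‖)
      atTop (𝓝 0)) :
    Tendsto (fun n => ‖xdag - xndag n‖) atTop (𝓝 0) := by
  have hker : ∀ n, Tn n (xdag - xndag n) = 0 := fun n => by rw [map_sub, heq, sub_self]
  have horth : ∀ n, ⟪xdag - xndag n, xndag n⟫_ℂ = 0 := fun n =>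
    Submodule.inner_right_of_mem_orthogonal (LinearMap.mem_ker.2 (hker n)) (hmem n)
  have hbdd : ∀ n, ‖xdag - xndag n‖ ≤ ‖xdag‖ := fun n =>
    norm_sub_le_of_inner_sub_eq_zero (horth n)
  have hinner : Tendsto (fun n => ⟪xdag - xndag n, xdag⟫_ℂ) atTop (𝓝 0) :=
    tendsto_inner_of_mem_orthogonal_ker T hbdd
      (tendsto_apply_of_apply_eq_zero T Tn hconv hbdd hker) hxdag_mem
  have hsq : Tendsto (fun n => ‖xdag - xndag n‖ ^ 2) atTop (𝓝 0) := by
    simp_rw [norm_sub_sq_eq_re_inner_of_inner_sub_eq_zero (horth _)]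
    simpa only [map_zero, Function.comp_def] using (RCLike.continuous_re.tendsto 0).comp hinner
  simpa using hsq.sqrt

theorem discrete_regularization_convergence
    {X Y : Type*} [NormedAddCommGroup X] [InnerProductSpace ℂ X] [CompleteSpace X]
    [NormedAddCommGroup Y] [InnerProductSpace ℂ Y] [CompleteSpace Y]
    {Yn : ℕ → Type*} [∀ n, NormedAddCommGroup (Yn n)]
    [∀ n, InnerProductSpace ℂ (Yn n)] [∀ n, FiniteDimensional ℂ (Yn n)]
    (T : X →L[ℂ] Y) (Tn : ∀ n, X →L[ℂ] Yn n)
    (y : Y) (xdag : X)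
    (hxdag_mem : xdag ∈ (LinearMap.ker (T : X →ₗ[ℂ] Y))ᗮ)
    (hxdag : (adjoint T ∘L T) xdag = adjoint T y)
    (xndag : ℕ → X)
    (hmem : ∀ n, xndag n ∈ (LinearMap.ker (Tn n : X →ₗ[ℂ] Yn n))ᗮ)
    (heq : ∀ n, Tn n (xndag n) = Tn n xdag)
    (hconv : Tendsto (fun n => ‖(adjoint T ∘L T) - (adjoint (Tn n) ∘L Tn n)‖)
      atTop (𝓝 0)) :
    Tendsto (fun n => ‖xdag - xndag n‖) atTop (𝓝 0) :=
  discrete_regularization_convergence_general T Tn xdag hxdag_mem xndag hmem heq hconv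
end

section
/- Let X, Y be complex Hilbert spaces and Yₙ a finite-dimensional complex inner product space, T : X → Y and Tₙ : X → Yₙ bounded linear operators. Let x† ∈ X, and suppose: (i) x† = φ(T*T)u for some u ∈ X, where φ : [0,∞) → ℝ is continuous with φ(0) = 0 and φ(λ) > 0 for λ > 0, and α·φ(λ)/(λ+α) ≤ c₀·φ(α) for all α, λ > 0 with a constant c₀ > 0; (ii) ε > 0 satisfies ‖T*T − Tₙ*Tₙ‖ ≤ ε; (iii) σ > 0 satisfies ‖Tₙ w‖ ≥ σ‖w‖ for all w in the orthogonal complement of ker Tₙ; (iv) x_n† and x̃_n† lie in the orthogonal complement of ker Tₙ with Tₙ x_n† = Tₙ x† and Tₙ x̃_n† = ỹₙ, where ‖Tₙ x† − ỹₙ‖ ≤ δ with δ ≤ σ·φ(ε). Then ‖x† − x̃_n†‖ ≤ (2c₀‖u‖ + 1)·φ(ε). -/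
/-!
Let `Q` be the orthogonal projection onto `ker Tₙ`; then `x† - xₙ† = Q x†`. Write
`φ(λ) = (λ + ε) g(λ)` with `g(λ) = φ(λ) / (λ + ε)`: the source condition gives
`‖g(T*T)‖ ≤ c₀ φ(ε) / ε`, and since `Q` kills the range of `Tₙ*`, with `v = g(T*T) u`
we get `Q x† = Q (T*T - Tₙ*Tₙ) v + ε Q v`, of norm at most `2 c₀ φ(ε) ‖u‖`.
The data error contributes `‖xₙ† - x̃ₙ†‖ ≤ δ / σ ≤ φ(ε)`.
-/

open ContinuousLinearMap

section Projection

variable {𝕜 E F : Type*} [RCLike 𝕜] [NormedAddCommGroup E] [InnerProductSpace 𝕜 E]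
  [CompleteSpace E] [NormedAddCommGroup F] [InnerProductSpace 𝕜 F] [CompleteSpace F]
  {K : Submodule 𝕜 E} [K.HasOrthogonalProjection] {B : E →L[𝕜] F}

theorem Submodule.starProjection_adjoint_apply_eq_zero
    (hK : K ≤ LinearMap.ker (B : E →ₗ[𝕜] F)) (w : F) :
    K.starProjection (adjoint B w) = 0 := by
  refine K.starProjection_apply_eq_zero_iff.mpr fun k hk => ?_
  rw [adjoint_inner_right, show B k = 0 from hK hk, inner_zero_left]

theorem Submodule.norm_starProjection_apply_le_of_le_ker
    (hK : K ≤ LinearMap.ker (B : E →ₗ[𝕜] F)) (a : E →L[𝕜] E) (v : E) :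
    ‖K.starProjection (a v)‖ ≤ ‖a - adjoint B ∘L B‖ * ‖v‖ :=
  calc ‖K.starProjection (a v)‖ = ‖K.starProjection ((a - adjoint B ∘L B) v)‖ := by
        rw [sub_apply, map_sub, comp_apply, K.starProjection_adjoint_apply_eq_zero hK, sub_zero]
    _ ≤ ‖(a - adjoint B ∘L B) v‖ := K.norm_starProjection_apply_le _
    _ ≤ ‖a - adjoint B ∘L B‖ * ‖v‖ := le_opNorm _ _

end Projection

theorem cfc_eq_mul_cfc_div_add_smul {A : Type*} [Ring A] [StarRing A] [Algebra ℝ A]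
    [TopologicalSpace A] [ContinuousFunctionalCalculus ℝ A IsSelfAdjoint]
    {a : A} (ha : IsSelfAdjoint a) {φ : ℝ → ℝ} (hφ : ContinuousOn φ (spectrum ℝ a))
    {ε : ℝ} (hε : ∀ x ∈ spectrum ℝ a, x + ε ≠ 0) :
    cfc φ a = a * cfc (fun x => φ x / (x + ε)) a + ε • cfc (fun x => φ x / (x + ε)) a := by
  have hdiv : ContinuousOn (fun x => φ x / (x + ε)) (spectrum ℝ a) :=
    hφ.div (continuousOn_id.add continuousOn_const) hε
  calc cfc φ a = cfc (fun x => x * (φ x / (x + ε)) + ε * (φ x / (x + ε))) a :=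
        cfc_congr fun x hx => by rw [← add_mul, mul_div_cancel₀ _ (hε x hx)]
    _ = _ := by rw [cfc_add .., cfc_mul .., cfc_id' .., cfc_const_mul ..]

theorem norm_div_add_le_of_source_condition {φ : ℝ → ℝ} (hφ0 : φ 0 = 0)
    (hφpos : ∀ l > (0 : ℝ), 0 < φ l) {c₀ : ℝ} (hc₀ : 0 ≤ c₀)
    (hsrc : ∀ α > (0 : ℝ), ∀ l > (0 : ℝ), α * φ l / (l + α) ≤ c₀ * φ α)
    {ε : ℝ} (hε : 0 < ε) {l : ℝ} (hl : 0 ≤ l) :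
    ‖φ l / (l + ε)‖ ≤ c₀ * φ ε / ε := by
  have hφε := hφpos ε hε
  rcases hl.eq_or_lt with rfl | hl
  · simp only [hφ0, zero_div, norm_zero]
    positivity
  · have := hφpos l hl
    rw [Real.norm_of_nonneg (by positivity), le_div_iff₀ hε]
    calc φ l / (l + ε) * ε = ε * φ l / (l + ε) := by ring
      _ ≤ c₀ * φ ε := hsrc ε hε l hl

theorem norm_cfc_div_add_le_of_source_condition {A : Type*} [NormedRing A] [StarRing A]
    [NormedAlgebra ℝ A] [IsometricContinuousFunctionalCalculus ℝ A IsSelfAdjoint]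
    {a : A} (ha : spectrum ℝ a ⊆ Set.Ici 0) {φ : ℝ → ℝ} (hφ0 : φ 0 = 0)
    (hφpos : ∀ l > (0 : ℝ), 0 < φ l) {c₀ : ℝ} (hc₀ : 0 ≤ c₀)
    (hsrc : ∀ α > (0 : ℝ), ∀ l > (0 : ℝ), α * φ l / (l + α) ≤ c₀ * φ α)
    {ε : ℝ} (hε : 0 < ε) :
    ‖cfc (fun x => φ x / (x + ε)) a‖ ≤ c₀ * φ ε / ε :=
  norm_cfc_le (by have := hφpos ε hε; positivity) fun _ hx =>
    norm_div_add_le_of_source_condition hφ0 hφpos hc₀ hsrc hε (ha hx)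

theorem Submodule.norm_starProjection_cfc_apply_le {X Y : Type*} [NormedAddCommGroup X]
    [InnerProductSpace ℂ X] [CompleteSpace X] [NormedAddCommGroup Y] [InnerProductSpace ℂ Y]
    [CompleteSpace Y] {K : Submodule ℂ X} [K.HasOrthogonalProjection] {B : X →L[ℂ] Y}
    (hK : K ≤ LinearMap.ker (B : X →ₗ[ℂ] Y)) {a : X →L[ℂ] X} (ha : 0 ≤ a)
    {φ : ℝ → ℝ} (hφcont : ContinuousOn φ (Set.Ici 0)) (hφ0 : φ 0 = 0)
    (hφpos : ∀ l > (0 : ℝ), 0 < φ l) {c₀ : ℝ} (hc₀ : 0 ≤ c₀)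
    (hsrc : ∀ α > (0 : ℝ), ∀ l > (0 : ℝ), α * φ l / (l + α) ≤ c₀ * φ α)
    {ε : ℝ} (hε : 0 < ε) (hnorm : ‖a - adjoint B ∘L B‖ ≤ ε) (u : X) :
    ‖K.starProjection (cfc φ a u)‖ ≤ 2 * c₀ * φ ε * ‖u‖ := by
  have hspec : spectrum ℝ a ⊆ Set.Ici 0 := fun _ hx => spectrum_nonneg_of_nonneg ha hx
  set v := cfc (fun x => φ x / (x + ε)) a u
  have hv : ‖v‖ ≤ c₀ * φ ε / ε * ‖u‖ := (le_opNorm _ _).trans <| by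
    gcongr
    exact norm_cfc_div_add_le_of_source_condition hspec hφ0 hφpos hc₀ hsrc hε
  have hsplit : cfc φ a u = a v + ε • v := by
    rw [cfc_eq_mul_cfc_div_add_smul ha.isSelfAdjoint (hφcont.mono hspec)
      fun x hx => (add_pos_of_nonneg_of_pos (hspec hx) hε).ne']
    rfl
  calc ‖K.starProjection (cfc φ a u)‖
      ≤ ‖K.starProjection (a v)‖ + ‖K.starProjection (ε • v)‖ := by
        rw [hsplit, map_add]; exact norm_add_le _ _
    _ ≤ ε * ‖v‖ + ‖ε • v‖ := by
        gcongr
        · exact (K.norm_starProjection_apply_le_of_le_ker hK a v).trans (by gcongr)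
        · exact K.norm_starProjection_apply_le _
    _ = 2 * ε * ‖v‖ := by rw [norm_smul, Real.norm_of_nonneg hε.le]; ring
    _ ≤ 2 * ε * (c₀ * φ ε / ε * ‖u‖) := by gcongr
    _ = 2 * c₀ * φ ε * ‖u‖ := by field_simp

theorem noisy_discrete_regularization_total_error
    {X Y Yn : Type*} [NormedAddCommGroup X] [InnerProductSpace ℂ X] [CompleteSpace X]
    [NormedAddCommGroup Y] [InnerProductSpace ℂ Y] [CompleteSpace Y]
    [NormedAddCommGroup Yn] [InnerProductSpace ℂ Yn] [FiniteDimensional ℂ Yn]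
    (T : X →L[ℂ] Y) (Tn : X →L[ℂ] Yn) (xdag : X)
    (φ : ℝ → ℝ) (hφcont : ContinuousOn φ (Set.Ici 0)) (hφ0 : φ 0 = 0)
    (hφpos : ∀ l > (0 : ℝ), 0 < φ l)
    (c₀ : ℝ) (hc₀ : 0 < c₀)
    (hsrc : ∀ α > (0 : ℝ), ∀ l > (0 : ℝ), α * φ l / (l + α) ≤ c₀ * φ α)
    (u : X) (hu : xdag = cfc φ (adjoint T ∘L T) u)
    (ε : ℝ) (hε : 0 < ε)
    (hnorm : ‖(adjoint T ∘L T) - (adjoint Tn ∘L Tn)‖ ≤ ε)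
    (σ : ℝ) (hσpos : 0 < σ)
    (hσ : ∀ w ∈ (LinearMap.ker (Tn : X →ₗ[ℂ] Yn))ᗮ, σ * ‖w‖ ≤ ‖Tn w‖)
    (xndag xtil : X)
    (hmem : xndag ∈ (LinearMap.ker (Tn : X →ₗ[ℂ] Yn))ᗮ) (hmem' : xtil ∈ (LinearMap.ker (Tn : X →ₗ[ℂ] Yn))ᗮ)
    (ytil : Yn) (heq : Tn xndag = Tn xdag) (heq' : Tn xtil = ytil)
    (δ : ℝ) (hδ : ‖Tn xdag - ytil‖ ≤ δ) (hδσ : δ ≤ σ * φ ε) :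
    ‖xdag - xtil‖ ≤ (2 * c₀ * ‖u‖ + 1) * φ ε := by
  set K := LinearMap.ker (Tn : X →ₗ[ℂ] Yn)
  have hproj : K.starProjection xdag = xdag - xndag :=
    K.eq_starProjection_of_mem_orthogonal' (by simp [K, heq]) hmem (by abel)
  have happrox : ‖xdag - xndag‖ ≤ 2 * c₀ * φ ε * ‖u‖ := by
    rw [← hproj, hu]
    exact K.norm_starProjection_cfc_apply_le le_rfl
      ((nonneg_iff_isPositive _).mpr (isPositive_adjoint_comp_self T))
      hφcont hφ0 hφpos hc₀.le hsrc hε hnorm u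
  have hnoise : ‖xndag - xtil‖ ≤ φ ε := by
    refine le_of_mul_le_mul_left ?_ hσpos
    calc σ * ‖xndag - xtil‖ ≤ ‖Tn (xndag - xtil)‖ := hσ _ (K.orthogonal.sub_mem hmem hmem')
      _ = ‖Tn xdag - ytil‖ := by rw [map_sub, heq, heq']
      _ ≤ σ * φ ε := hδ.trans hδσ
  calc ‖xdag - xtil‖ ≤ ‖xdag - xndag‖ + ‖xndag - xtil‖ := norm_sub_le_norm_sub_add_norm_sub _ _ _
    _ ≤ (2 * c₀ * ‖u‖ + 1) * φ ε := by linarith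
end

section
/- Let X, Y be complex Hilbert spaces and Yₙ a finite-dimensional complex inner product space, T : X → Y and Tₙ : X → Yₙ bounded linear operators, and x† ∈ X. For α > 0 let x_α be the unique solution of (T*T + αI)x_α = T*T x† and let x_{α,n} be the unique solution of (Tₙ*Tₙ + αI)x_{α,n} = Tₙ*Tₙ x†. If ε > 0 satisfies ‖T*T − Tₙ*Tₙ‖ ≤ ε, then ‖x_α − x_{α,n}‖ ≤ (ε/α)·‖x† − x_α‖. -/
/-!
Put `A = T*T`, `B = Tₙ*Tₙ` and `v = x_α - x_{α,n}`. Subtracting the two normal equations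
gives `(B + α) v = (A - B)(x† - x_α)`, whose norm is at most `ε ‖x† - x_α‖`. Since `B` is
positive, `α ‖v‖² ≤ re ⟪(B + α) v, v⟫ ≤ ‖(B + α) v‖ ‖v‖`, i.e. `B + α` is bounded below by `α`.
-/

open ContinuousLinearMap

namespace ContinuousLinearMap

theorem IsPositive.mul_norm_le_norm_add_smul {𝕜 E : Type*} [RCLike 𝕜] [NormedAddCommGroup E]
    [InnerProductSpace 𝕜 E] [Module ℝ E] [IsScalarTower ℝ 𝕜 E] {B : E →L[𝕜] E}
    (hB : B.IsPositive) (α : ℝ) (v : E) : α * ‖v‖ ≤ ‖B v + α • v‖ := by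
  have hsq : α * ‖v‖ ^ 2 ≤ ‖B v + α • v‖ * ‖v‖ :=
    calc α * ‖v‖ ^ 2 ≤ RCLike.re (inner 𝕜 (B v) v) + α * ‖v‖ ^ 2 :=
          le_add_of_nonneg_left (hB.re_inner_nonneg_left v)
      _ = RCLike.re (inner 𝕜 (B v + α • v) v) := by
          rw [inner_add_left, map_add, RCLike.real_smul_eq_coe_smul (K := 𝕜),
            inner_smul_real_left, RCLike.smul_re, inner_self_eq_norm_sq]
      _ ≤ ‖B v + α • v‖ * ‖v‖ := re_inner_le_norm _ _
  rcases (norm_nonneg v).eq_or_lt with hv | hv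
  · rw [← hv, mul_zero]
    exact norm_nonneg _
  · rw [pow_two, ← mul_assoc] at hsq
    exact le_of_mul_le_mul_right hsq hv

end ContinuousLinearMap

theorem regularized_difference_eq {R E S : Type*} [Ring R] [AddCommGroup E] [Module R E]
    [TopologicalSpace E] [IsTopologicalAddGroup E] [DistribSMul S E] {A B : E →L[R] E} {α : S}
    {x xa xb : E} (hxa : A xa + α • xa = A x) (hxb : B xb + α • xb = B x) :
    B (xa - xb) + α • (xa - xb) = (A - B) (x - xa) := by
  rw [map_sub, map_sub, sub_apply, sub_apply, smul_sub, ← hxa, ← hxb]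
  abel

theorem regularized_discretization_difference_bound_general
    {X Y Yn : Type*} [NormedAddCommGroup X] [InnerProductSpace ℂ X] [CompleteSpace X]
    [NormedAddCommGroup Y] [InnerProductSpace ℂ Y] [CompleteSpace Y]
    [NormedAddCommGroup Yn] [InnerProductSpace ℂ Yn] [FiniteDimensional ℂ Yn]
    (T : X →L[ℂ] Y) (Tn : X →L[ℂ] Yn) (xdag : X)
    (α : ℝ) (hα : 0 < α) (xa xan : X)
    (hxa : (adjoint T ∘L T) xa + α • xa = (adjoint T ∘L T) xdag)
    (hxan : (adjoint Tn ∘L Tn) xan + α • xan = (adjoint Tn ∘L Tn) xdag)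
    (ε : ℝ)
    (hnorm : ‖(adjoint T ∘L T) - (adjoint Tn ∘L Tn)‖ ≤ ε) :
    ‖xa - xan‖ ≤ (ε / α) * ‖xdag - xa‖ := by
  rw [div_mul_eq_mul_div, le_div_iff₀ hα, mul_comm]
  calc α * ‖xa - xan‖
      ≤ ‖(adjoint Tn ∘L Tn) (xa - xan) + α • (xa - xan)‖ :=
        (isPositive_adjoint_comp_self Tn).mul_norm_le_norm_add_smul α _
    _ = ‖((adjoint T ∘L T) - (adjoint Tn ∘L Tn)) (xdag - xa)‖ := by
        rw [regularized_difference_eq hxa hxan]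
    _ ≤ ε * ‖xdag - xa‖ := le_of_opNorm_le _ hnorm _

theorem regularized_discretization_difference_bound
    {X Y Yn : Type*} [NormedAddCommGroup X] [InnerProductSpace ℂ X] [CompleteSpace X]
    [NormedAddCommGroup Y] [InnerProductSpace ℂ Y] [CompleteSpace Y]
    [NormedAddCommGroup Yn] [InnerProductSpace ℂ Yn] [FiniteDimensional ℂ Yn]
    (T : X →L[ℂ] Y) (Tn : X →L[ℂ] Yn) (xdag : X)
    (α : ℝ) (hα : 0 < α) (xa xan : X)
    (hxa : (adjoint T ∘L T) xa + α • xa = (adjoint T ∘L T) xdag)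
    (hxan : (adjoint Tn ∘L Tn) xan + α • xan = (adjoint Tn ∘L Tn) xdag)
    (ε : ℝ) (hε : 0 < ε)
    (hnorm : ‖(adjoint T ∘L T) - (adjoint Tn ∘L Tn)‖ ≤ ε) :
    ‖xa - xan‖ ≤ (ε / α) * ‖xdag - xa‖ :=
  regularized_discretization_difference_bound_general T Tn xdag α hα xa xan hxa hxan ε hnorm
end

section
/- Let X, Y be complex Hilbert spaces and Yₙ a finite-dimensional complex inner product space, T : X → Y and Tₙ : X → Yₙ bounded linear operators, and x† ∈ X. For α > 0 let x_α be the unique solution of (T*T + αI)x_α = T*T x† and let x_{α,n} be the unique solution of (Tₙ*Tₙ + αI)x_{α,n} = Tₙ*Tₙ x†. If ε > 0 satisfies ‖T*T − Tₙ*Tₙ‖ ≤ ε, then ‖x† − x_{α,n}‖ ≤ (1 + ε/α)·‖x† − x_α‖. -/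
open ContinuousLinearMap

theorem regularized_discretization_total_bound
    {X Y Yn : Type*} [NormedAddCommGroup X] [InnerProductSpace ℂ X] [CompleteSpace X]
    [NormedAddCommGroup Y] [InnerProductSpace ℂ Y] [CompleteSpace Y]
    [NormedAddCommGroup Yn] [InnerProductSpace ℂ Yn] [FiniteDimensional ℂ Yn]
    (T : X →L[ℂ] Y) (Tn : X →L[ℂ] Yn) (xdag : X)
    (α : ℝ) (hα : 0 < α) (xa xan : X)
    (hxa : (adjoint T ∘L T) xa + α • xa = (adjoint T ∘L T) xdag)
    (hxan : (adjoint Tn ∘L Tn) xan + α • xan = (adjoint Tn ∘L Tn) xdag)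
    (ε : ℝ) (hε : 0 < ε)
    (hnorm : ‖(adjoint T ∘L T) - (adjoint Tn ∘L Tn)‖ ≤ ε) :
    ‖xdag - xan‖ ≤ (1 + ε / α) * ‖xdag - xa‖ := by
  set A := adjoint T ∘L T with hA
  set B := adjoint Tn ∘L Tn with hB
  set e := xdag - xa with he
  set en := xdag - xan with hen
  -- coercivity: α‖u‖ ≤ ‖B u + α • u‖
  have key : ∀ u : X, α * ‖u‖ ≤ ‖B u + α • u‖ := by
    intro u
    rcases eq_or_ne u 0 with rfl | hu
    · simp
    have hnu : 0 < ‖u‖ := norm_pos_iff.mpr hu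
    have hre : α * (‖u‖ * ‖u‖) ≤ RCLike.re (inner (𝕜 := ℂ) (B u + α • u) u) := by
      rw [inner_add_left]
      have h1 : RCLike.re (inner (𝕜 := ℂ) (B u) u) = ‖Tn u‖ ^ 2 := by
        rw [hB, ContinuousLinearMap.comp_apply, adjoint_inner_left,
          inner_self_eq_norm_sq]
      have h2 : RCLike.re (inner (𝕜 := ℂ) ((α : ℝ) • u) u) = α * (‖u‖ * ‖u‖) := by
        rw [RCLike.real_smul_eq_coe_smul (K := ℂ), inner_smul_left]
        simp [inner_self_eq_norm_sq, sq]
      rw [map_add, h1, h2]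
      nlinarith [sq_nonneg ‖Tn u‖]
    have hcs : RCLike.re (inner (𝕜 := ℂ) (B u + α • u) u) ≤ ‖B u + α • u‖ * ‖u‖ :=
      re_inner_le_norm _ _
    have := hre.trans hcs
    nlinarith
  -- both residuals solve the same equation
  have hAe : A e + α • e = α • xdag := by
    rw [he, map_sub, smul_sub, ← hxa]; abel
  have hBen : B en + α • en = α • xdag := by
    rw [hen, map_sub, smul_sub, ← hxan]; abel
  have heq : B (en - e) + α • (en - e) = (A - B) e := by
    have h4 : B en + α • en = A e + α • e := hBen.trans hAe.symm
    rw [map_sub, smul_sub, ContinuousLinearMap.sub_apply]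
    rw [show B en = A e + α • e - α • en by rw [← h4]; abel]
    abel
  have hdiff : α * ‖en - e‖ ≤ ε * ‖e‖ := by
    have h5 := key (en - e)
    rw [heq] at h5
    have h6 : ‖(A - B) e‖ ≤ ‖A - B‖ * ‖e‖ := (A - B).le_opNorm e
    have h7 : ‖A - B‖ * ‖e‖ ≤ ε * ‖e‖ :=
      mul_le_mul_of_nonneg_right hnorm (norm_nonneg e)
    linarith
  have h8 : ‖en - e‖ ≤ ε / α * ‖e‖ := by
    rw [div_mul_eq_mul_div, le_div_iff₀ hα]
    linarith [hdiff]
  calc ‖en‖ = ‖(en - e) + e‖ := by rw [sub_add_cancel]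
    _ ≤ ‖en - e‖ + ‖e‖ := norm_add_le _ _
    _ ≤ ε / α * ‖e‖ + ‖e‖ := by linarith
    _ = (1 + ε / α) * ‖e‖ := by ring
end

section
/- Let X, Y be complex Hilbert spaces and Yₙ a finite-dimensional complex inner product space, T : X → Y and Tₙ : X → Yₙ bounded linear operators, and x† ∈ X. Suppose: (i) x† = φ(T*T)u for some u ∈ X, where φ : [0,∞) → ℝ is continuous with φ(0) = 0 and φ(λ) > 0 for λ > 0, and α·φ(λ)/(λ+α) ≤ c₀·φ(α) for all α, λ > 0 with a constant c₀ > 0; (ii) ε > 0 satisfies ‖T*T − Tₙ*Tₙ‖ ≤ ε; (iii) ỹₙ ∈ Yₙ satisfies ‖Tₙ x† − ỹₙ‖ ≤ √ε·φ(ε). Let x̃ be the unique solution of (Tₙ*Tₙ + εI)x̃ = Tₙ* ỹₙ. Then ‖x† − x̃‖ ≤ (2c₀‖u‖ + 1)·φ(ε). -/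
/-!
Write `R = (Tₙ*Tₙ + ε)⁻¹`. Then `x† - x̃ = R Tₙ*(Tₙ x† - ỹₙ) + ε R x†`. Since `λ / (λ + ε)² ≤ 1 / (4ε)`,
spectral calculus gives `‖R Tₙ*‖ ≤ 1 / (2√ε)`, so the data term is at most `φ(ε) / 2`. For the
other term, the resolvent identity `R = R_A + R (A - B) R_A` with `A = T*T`, `B = Tₙ*Tₙ`, together
with `‖R‖ ≤ 1/ε` and `‖A - B‖ ≤ ε`, shows that `‖ε R φ(A)‖` is at most twice `‖ε R_A φ(A)‖`, and
the source inequality bounds the latter by `c₀ φ(ε)` on the spectrum of `A`.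
-/

open ContinuousLinearMap

section Resolvent

variable {A : Type*} [CStarAlgebra A] [PartialOrder A] [StarOrderedRing A] {a b : A} {ε : ℝ}

lemma add_ne_zero_of_mem_spectrum (ha : 0 ≤ a) (hε : 0 < ε) :
    ∀ l ∈ spectrum ℝ a, l + ε ≠ 0 := fun _ hl =>
  (add_pos_of_nonneg_of_pos (spectrum_nonneg_of_nonneg ha hl) hε).ne'

lemma cfc_inv_add_mul_add_algebraMap (ha : 0 ≤ a) (hε : 0 < ε) :
    cfc (fun l : ℝ => (l + ε)⁻¹) a * (a + algebraMap ℝ A ε) = 1 := by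
  have := (cfcUnits (· + ε) a (add_ne_zero_of_mem_spectrum ha hε)).inv_mul
  rwa [val_inv_cfcUnits _ a, val_cfcUnits _ a, cfc_add_const ε (fun l => l) a,
    cfc_id' ℝ a] at this

lemma add_algebraMap_mul_cfc_inv_add (ha : 0 ≤ a) (hε : 0 < ε) :
    (a + algebraMap ℝ A ε) * cfc (fun l : ℝ => (l + ε)⁻¹) a = 1 := by
  have := (cfcUnits (· + ε) a (add_ne_zero_of_mem_spectrum ha hε)).mul_inv
  rwa [val_inv_cfcUnits _ a, val_cfcUnits _ a, cfc_add_const ε (fun l => l) a,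
    cfc_id' ℝ a] at this

lemma norm_cfc_inv_add_le (ha : 0 ≤ a) (hε : 0 < ε) :
    ‖cfc (fun l : ℝ => (l + ε)⁻¹) a‖ ≤ ε⁻¹ := by
  refine norm_cfc_le (inv_nonneg.2 hε.le) fun l hl => ?_
  have hl : 0 ≤ l := spectrum_nonneg_of_nonneg ha hl
  rw [Real.norm_of_nonneg (by positivity)]
  exact inv_anti₀ hε (by linarith)

lemma cfc_inv_add_eq_add_mul_sub_mul (ha : 0 ≤ a) (hb : 0 ≤ b) (hε : 0 < ε) :
    cfc (fun l : ℝ => (l + ε)⁻¹) b = cfc (fun l : ℝ => (l + ε)⁻¹) a +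
      cfc (fun l : ℝ => (l + ε)⁻¹) b * (a - b) * cfc (fun l : ℝ => (l + ε)⁻¹) a := by
  have hab : a - b = (a + algebraMap ℝ A ε) - (b + algebraMap ℝ A ε) := by abel
  rw [hab, mul_sub, sub_mul, mul_assoc, add_algebraMap_mul_cfc_inv_add ha hε,
    cfc_inv_add_mul_add_algebraMap hb hε]
  noncomm_ring

lemma norm_smul_cfc_inv_add_mul_le_two_mul (ha : 0 ≤ a) (hb : 0 ≤ b) (hε : 0 < ε)
    (hab : ‖a - b‖ ≤ ε) (p : A) :
    ‖ε • (cfc (fun l : ℝ => (l + ε)⁻¹) b * p)‖ ≤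
      2 * ‖ε • (cfc (fun l : ℝ => (l + ε)⁻¹) a * p)‖ := by
  have hres := cfc_inv_add_eq_add_mul_sub_mul ha hb hε
  set Ra := cfc (fun l : ℝ => (l + ε)⁻¹) a
  set Rb := cfc (fun l : ℝ => (l + ε)⁻¹) b
  calc ‖ε • (Rb * p)‖ = ‖ε • (Ra * p) + Rb * (a - b) * (ε • (Ra * p))‖ := by
        conv_lhs => rw [hres]
        rw [add_mul, smul_add, mul_smul_comm, mul_assoc _ Ra]
    _ ≤ ‖ε • (Ra * p)‖ + ‖Rb‖ * ‖a - b‖ * ‖ε • (Ra * p)‖ :=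
        norm_add_le_of_le le_rfl (norm_mul_le_of_le (norm_mul_le _ _) le_rfl)
    _ ≤ ‖ε • (Ra * p)‖ + ε⁻¹ * ε * ‖ε • (Ra * p)‖ := by
        gcongr
        exact norm_cfc_inv_add_le hb hε
    _ = 2 * ‖ε • (Ra * p)‖ := by
        rw [inv_mul_cancel₀ hε.ne']
        ring

lemma norm_smul_cfc_inv_add_mul_cfc_le {φ : ℝ → ℝ} {C : ℝ} (ha : 0 ≤ a) (hε : 0 < ε)
    (hφ : ContinuousOn φ (Set.Ici 0)) (hφ_nonneg : ∀ l ≥ 0, 0 ≤ φ l)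
    (hφC : ∀ l ≥ 0, ε * φ l / (l + ε) ≤ C) :
    ‖ε • (cfc (fun l : ℝ => (l + ε)⁻¹) a * cfc φ a)‖ ≤ C := by
  have hspec : spectrum ℝ a ⊆ Set.Ici 0 := fun l hl => spectrum_nonneg_of_nonneg ha hl
  have hinv : ContinuousOn (fun l : ℝ => (l + ε)⁻¹) (spectrum ℝ a) :=
    (continuousOn_id.add continuousOn_const).inv₀ (add_ne_zero_of_mem_spectrum ha hε)
  have hC : 0 ≤ C := by
    have h0 := hφC 0 le_rfl
    rw [zero_add, mul_div_cancel_left₀ _ hε.ne'] at h0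
    exact (hφ_nonneg 0 le_rfl).trans h0
  rw [← cfc_mul _ _ a hinv (hφ.mono hspec),
    ← cfc_smul ε (fun l => (l + ε)⁻¹ * φ l) a (hinv.mul (hφ.mono hspec))]
  refine norm_cfc_le hC fun l hl => ?_
  have hl : 0 ≤ l := hspec hl
  have hφl := hφ_nonneg l hl
  rw [Real.norm_of_nonneg (by positivity)]
  convert hφC l hl using 1
  rw [smul_eq_mul]
  field_simp

end Resolvent

section Tikhonov

variable {E F : Type*} [NormedAddCommGroup E] [InnerProductSpace ℂ E] [CompleteSpace E]
  [NormedAddCommGroup F] [InnerProductSpace ℂ F] [CompleteSpace F] {ε : ℝ}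

lemma nonneg_adjoint_comp_self (K : E →L[ℂ] F) : 0 ≤ adjoint K ∘L K :=
  (nonneg_iff_isPositive _).2 (isPositive_adjoint_comp_self K)

lemma norm_cfc_inv_add_adjoint_comp_self_comp_adjoint_le (K : E →L[ℂ] F) (hε : 0 < ε) :
    ‖cfc (fun l : ℝ => (l + ε)⁻¹) (adjoint K ∘L K) ∘L adjoint K‖ ≤ (2 * √ε)⁻¹ := by
  set B := adjoint K ∘L K
  set R := cfc (fun l : ℝ => (l + ε)⁻¹) B
  have hB := nonneg_adjoint_comp_self K
  have hinv : ContinuousOn (fun l : ℝ => (l + ε)⁻¹) (spectrum ℝ B) :=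
    (continuousOn_id.add continuousOn_const).inv₀ (add_ne_zero_of_mem_spectrum hB hε)
  have hadj : adjoint (K ∘L R) = R ∘L adjoint K := by
    rw [adjoint_comp, ← star_eq_adjoint R, (cfc_predicate _ B : IsSelfAdjoint R).star_eq]
  have hsq : adjoint (K ∘L R) ∘L (K ∘L R) =
      cfc (fun l : ℝ => (l + ε)⁻¹ * (l * (l + ε)⁻¹)) B := by
    rw [cfc_mul (fun l => (l + ε)⁻¹) (fun l => l * (l + ε)⁻¹) B hinv (continuousOn_id.mul hinv),
      cfc_mul (fun l => l) (fun l => (l + ε)⁻¹) B continuousOn_id hinv, cfc_id' ℝ B, hadj]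
    rfl
  have hbound : ‖K ∘L R‖ * ‖K ∘L R‖ ≤ (2 * √ε)⁻¹ * (2 * √ε)⁻¹ := by
    rw [← norm_adjoint_comp_self, hsq, ← mul_inv, show 2 * √ε * (2 * √ε) = 4 * ε by
      nlinarith [Real.mul_self_sqrt hε.le]]
    refine norm_cfc_le (by positivity) fun l hl => ?_
    have hl : 0 ≤ l := spectrum_nonneg_of_nonneg hB hl
    rw [Real.norm_of_nonneg (by positivity)]
    calc (l + ε)⁻¹ * (l * (l + ε)⁻¹) = l / (l + ε) ^ 2 := by rw [div_eq_mul_inv, ← inv_pow]; ring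
      _ ≤ 1 / (4 * ε) := by
        rw [div_le_div_iff₀ (by positivity) (by positivity)]
        nlinarith [sq_nonneg (l - ε)]
      _ = (4 * ε)⁻¹ := one_div _
  rw [← hadj, adjoint.norm_map]
  exact (mul_self_le_mul_self_iff (norm_nonneg _) (by positivity)).2 hbound

lemma sub_eq_cfc_inv_add_apply_of_tikhonov (K : E →L[ℂ] F) (hε : 0 < ε) {x xt : E} {y : F}
    (hxt : (adjoint K ∘L K) xt + ε • xt = adjoint K y) :
    x - xt = cfc (fun l : ℝ => (l + ε)⁻¹) (adjoint K ∘L K) (adjoint K (K x - y)) +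
      ε • cfc (fun l : ℝ => (l + ε)⁻¹) (adjoint K ∘L K) x := by
  set R := cfc (fun l : ℝ => (l + ε)⁻¹) (adjoint K ∘L K)
  have hR : ∀ v, R ((adjoint K ∘L K) v + ε • v) = v := fun v => by
    simpa [ContinuousLinearMap.algebraMap_apply] using
      congr($(cfc_inv_add_mul_add_algebraMap (nonneg_adjoint_comp_self K) hε) v)
  calc x - xt = R ((adjoint K ∘L K) x + ε • x) - R (adjoint K y) := by rw [hR, ← hxt, hR]
    _ = R (adjoint K (K x - y)) + ε • R x := by
        rw [← map_sub, comp_apply, add_sub_right_comm, ← map_sub, map_add, R.map_smul_of_tower]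

end Tikhonov

theorem regularized_discretization_rate_under_source_condition
    {X Y Yn : Type*} [NormedAddCommGroup X] [InnerProductSpace ℂ X] [CompleteSpace X]
    [NormedAddCommGroup Y] [InnerProductSpace ℂ Y] [CompleteSpace Y]
    [NormedAddCommGroup Yn] [InnerProductSpace ℂ Yn] [FiniteDimensional ℂ Yn]
    (T : X →L[ℂ] Y) (Tn : X →L[ℂ] Yn) (xdag : X)
    (φ : ℝ → ℝ) (hφcont : ContinuousOn φ (Set.Ici 0)) (hφ0 : φ 0 = 0)
    (hφpos : ∀ l > (0 : ℝ), 0 < φ l)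
    (c₀ : ℝ) (hc₀ : 0 < c₀)
    (hsrc : ∀ α > (0 : ℝ), ∀ l > (0 : ℝ), α * φ l / (l + α) ≤ c₀ * φ α)
    (u : X) (hu : xdag = cfc φ (adjoint T ∘L T) u)
    (ε : ℝ) (hε : 0 < ε)
    (hnorm : ‖(adjoint T ∘L T) - (adjoint Tn ∘L Tn)‖ ≤ ε)
    (ytil : Yn) (hytil : ‖Tn xdag - ytil‖ ≤ Real.sqrt ε * φ ε)
    (xtil : X)
    (hxtil : (adjoint Tn ∘L Tn) xtil + ε • xtil = adjoint Tn ytil) :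
    ‖xdag - xtil‖ ≤ (2 * c₀ * ‖u‖ + 1) * φ ε := by
  have hφε : 0 < φ ε := hφpos ε hε
  have hφ_nonneg : ∀ l ≥ 0, 0 ≤ φ l := fun l hl =>
    hl.eq_or_lt.elim (fun h => h ▸ hφ0.ge) fun h => (hφpos l h).le
  have hφ_bound : ∀ l ≥ 0, ε * φ l / (l + ε) ≤ c₀ * φ ε := fun l hl =>
    hl.eq_or_lt.elim (fun h => by rw [← h, hφ0, mul_zero, zero_div]; positivity) fun h => hsrc ε hε l h
  set R := cfc (fun l : ℝ => (l + ε)⁻¹) (adjoint Tn ∘L Tn)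
  have hdata : ‖R (adjoint Tn (Tn xdag - ytil))‖ ≤ φ ε / 2 :=
    calc ‖(R ∘L adjoint Tn) (Tn xdag - ytil)‖ ≤ (2 * √ε)⁻¹ * (√ε * φ ε) :=
          le_of_opNorm_le_of_le _ (norm_cfc_inv_add_adjoint_comp_self_comp_adjoint_le Tn hε) hytil
      _ = φ ε / 2 := by field_simp
  have hsource : ‖ε • R xdag‖ ≤ 2 * (c₀ * φ ε) * ‖u‖ := by
    rw [hu]
    change ‖(ε • (R * cfc φ (adjoint T ∘L T))) u‖ ≤ _
    calc ‖(ε • (R * cfc φ (adjoint T ∘L T))) u‖ ≤ ‖ε • (R * cfc φ (adjoint T ∘L T))‖ * ‖u‖ :=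
          le_opNorm _ u
      _ ≤ 2 * (c₀ * φ ε) * ‖u‖ := by
          gcongr
          refine (norm_smul_cfc_inv_add_mul_le_two_mul (nonneg_adjoint_comp_self T)
            (nonneg_adjoint_comp_self Tn) hε hnorm _).trans ?_
          gcongr
          exact norm_smul_cfc_inv_add_mul_cfc_le (nonneg_adjoint_comp_self T) hε hφcont
            hφ_nonneg hφ_bound
  calc ‖xdag - xtil‖ ≤ ‖R (adjoint Tn (Tn xdag - ytil))‖ + ‖ε • R xdag‖ := by
        rw [sub_eq_cfc_inv_add_apply_of_tikhonov Tn hε hxtil]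
        exact norm_add_le _ _
    _ ≤ φ ε / 2 + 2 * (c₀ * φ ε) * ‖u‖ := add_le_add hdata hsource
    _ ≤ (2 * c₀ * ‖u‖ + 1) * φ ε := by nlinarith
end
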